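/- arXiv:1511.05522 — 2 statements merged into one kernel-verified Lean document; each statement's English description precedes it below -/
import Mathlib

section
/- Let F̂ : K × K → 𝔸 be a normalized 2-cocycle and let ε : K³ → ℂˣ be a normalized cochain with δ_K ε = F̂ ∧ F. Define ω : G³ → ℂˣ by ω((a₁,x₁),(a₂,x₂),(a₃,x₃)) := F̂(x₁,x₂)(a₃)·ε(x₁,x₂,x₃), define μ ∈ C²(G,Map(K,ℂˣ)) by μ(x₁;(a₂,x₂),(a₃,x₃)) := (F̂(x₁,x₂)(a₃)·ε(x₁,x₂,x₃))⁻¹, and define γ : K → C¹(G,Map(K,ℂˣ)) by γ(y)(x₁;(a₂,x₂)) := F̂(y,x₁)(a₂)·ε(y,x₁,x₂). Then: (i) (δ_G μ)(x₁;g₁,g₂,g₃)·ω(g₁,g₂,g₃) = 1 for all x₁ ∈ K and g₁,g₂,g₃ ∈ G; (ii) δ_G(γ(y))(x₁;(a₂,x₂),(a₃,x₃)) = μ(x₁;(a₂,x₂),(a₃,x₃))·μ(yx₁;(a₂,x₂),(a₃,x₃))⁻¹ for all y,x₁,x₂,x₃ ∈ K and a₂,a₃ ∈ A; and (iii) (δ_K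 γ)(k₁,k₂)(x₁;(a₂,x₂)) = F̂(k₁,k₂)(ˣ¹a₂)·F̂(k₁,k₂)(F(x₁,x₂))·ε(k₁,k₂,x₁x₂)·ε(k₁,k₂,x₁)⁻¹ for all k₁,k₂,x₁,x₂ ∈ K and a₂ ∈ A. -/
open scoped BigOperators

section Defs

variable {A K : Type*} [CommGroup A] [Group K] [MulDistribMulAction K A]

/-- The product of the twisted (semidirect) product `G = A ⋊_F K`:
`(a₁,k₁)·(a₂,k₂) = (a₁ · ᵏ¹a₂ · F(k₁,k₂), k₁k₂)`. -/
def sdMul (F : K → K → A) (g₁ g₂ : A × K) : A × K :=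
  (g₁.1 * g₁.2 • g₂.1 * F g₁.2 g₂.2, g₁.2 * g₂.2)

/-- The right action of `G = A ⋊_F K` on `K`:  `x ◁ (a,k) = x * k`. -/
def sdAct (x : K) (g : A × K) : K := x * g.2

/-- `κ : K × G → A`, `κ_{x,(a,k)} = ˣa · F(x,k)`. -/
def kap (F : K → K → A) (x : K) (g : A × K) : A := x • g.1 * F x g.2

/-- Underlying type of the group of cochains `C^q(G, Map(K,ℂˣ))`. -/
abbrev Cq (A K : Type*) (q : ℕ) := K → (Fin q → A × K) → ℂˣ

/-- Normalization condition for cochains in `C^q(G, Map(K,ℂˣ))`: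
`f(x; g₁,…,g_q) = 1` whenever some `gᵢ = 1`. -/
def NormG {q : ℕ} (f : Cq A K q) : Prop :=
  ∀ x g, (∃ i, g i = ((1 : A), (1 : K))) → f x g = 1

/-- The differential `δ_G : C^q(G, Map(K,ℂˣ)) → C^{q+1}(G, Map(K,ℂˣ))`. -/
def deltaG (F : K → K → A) {q : ℕ} (f : Cq A K q) : Cq A K (q + 1) := fun x g =>
  f (sdAct x (g 0)) (Fin.tail g) *
    ∏ i : Fin (q + 1), f x (Fin.contractNth i (sdMul F) g) ^ ((-1 : ℤ) ^ ((i : ℕ) + 1))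

/-- Underlying type of the group of cochains `C^q(A, ℂˣ)`. -/
abbrev CqA (A : Type*) (q : ℕ) := (Fin q → A) → ℂˣ

/-- Normalization condition for cochains in `C^q(A, ℂˣ)`. -/
def NormA {q : ℕ} (α : CqA A q) : Prop := ∀ a, (∃ i, a i = 1) → α a = 1

/-- The differential `δ_A` on `C^*(A, ℂˣ)` (trivial `A`-action on `ℂˣ`). -/
def deltaA {q : ℕ} (α : CqA A q) : CqA A (q + 1) := fun a =>
  α (Fin.tail a) *
    ∏ i : Fin (q + 1), α (Fin.contractNth i (· * ·) a) ^ ((-1 : ℤ) ^ ((i : ℕ) + 1))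

/-- The restriction map `ψ : C^q(G, Map(K,ℂˣ)) → C^q(A, ℂˣ)`,
`ψ(f)(a₁,…,a_q) = f(1; (a₁,1),…,(a_q,1))`. -/
def psiA {q : ℕ} (f : Cq A K q) : CqA A q := fun a => f 1 fun i => (a i, 1)

/-- The map `φ : C^q(A, ℂˣ) → C^q(G, Map(K,ℂˣ))`,
`φ(α)(x; g₁,…,g_q) = α(κ_{x,g₁}, κ_{x◁g₁,g₂}, …, κ_{x◁g₁⋯g_{q-1},g_q})`. -/
def phiA (F : K → K → A) {q : ℕ} (α : CqA A q) : Cq A K q := fun x g =>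
  α fun i => kap F (x * ((List.ofFn fun j => (g j).2).take (i : ℕ)).prod) (g i)

/-- The right `K`-action `f ◁ k` on `C^q(G, Map(K,ℂˣ))`: `(f ◁ k)(x; g) = f(kx; g)`. -/
def rAct {q : ℕ} (f : Cq A K q) (k : K) : Cq A K q := fun x g => f (k * x) g

/-- Underlying type of `C^p(K, C^q(G, Map(K,ℂˣ)))`. -/
abbrev Cpq (A K : Type*) (p q : ℕ) := (Fin p → K) → Cq A K q

/-- Normalization in the `K`-variables. -/
def NormK {p q : ℕ} (h : Cpq A K p q) : Prop := ∀ k, (∃ i, k i = 1) → h k = 1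

/-- The differential `δ_K : C^p(K, C^q(G,Map(K,ℂˣ))) → C^{p+1}(K, C^q(G,Map(K,ℂˣ)))`. -/
def deltaK {p q : ℕ} (h : Cpq A K p q) : Cpq A K (p + 1) q := fun k =>
  h (Fin.tail k) *
    (∏ i : Fin p, h (Fin.contractNth i.castSucc (· * ·) k) ^ ((-1 : ℤ) ^ ((i : ℕ) + 1))) *
    rAct (h (Fin.init k)) (k (Fin.last p)) ^ ((-1 : ℤ) ^ (p + 1))

end Defs

/-- `ω((a₁,x₁),(a₂,x₂),(a₃,x₃)) = F̂(x₁,x₂)(a₃)·ε(x₁,x₂,x₃)`. -/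
def omegaC {A K : Type*} [CommGroup A] (Fh : K → K → A →* ℂˣ) (ε : K → K → K → ℂˣ)
    (g₁ g₂ g₃ : A × K) : ℂˣ :=
  Fh g₁.2 g₂.2 g₃.1 * ε g₁.2 g₂.2 g₃.2

/-- `μ(x₁;(a₂,x₂),(a₃,x₃)) = (F̂(x₁,x₂)(a₃)·ε(x₁,x₂,x₃))⁻¹`. -/
def muC {A K : Type*} [CommGroup A] (Fh : K → K → A →* ℂˣ) (ε : K → K → K → ℂˣ) : Cq A K 2 :=
  fun x₁ g => (Fh x₁ (g 0).2 (g 1).1 * ε x₁ (g 0).2 (g 1).2)⁻¹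

/-- `γ(y)(x₁;(a₂,x₂)) = F̂(y,x₁)(a₂)·ε(y,x₁,x₂)`. -/
def gammaC {A K : Type*} [CommGroup A] (Fh : K → K → A →* ℂˣ) (ε : K → K → K → ℂˣ) :
    K → Cq A K 1 :=
  fun y x₁ g => Fh y x₁ (g 0).1 * ε y x₁ (g 0).2

/-! Each identity is a direct computation. After expanding the differentials and using that
`F̂(k₁,k₂)` is a character, two kinds of term remain that do not cancel immediately:
`F̂(k₁,k₂)(ᵏ³a)`, rewritten through the twisted cocycle identity of `F̂`, and `F̂(k₁,k₂)(F(k₃,k₄))`,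
rewritten as `(δ_K ε)(k₁,k₂,k₃,k₄)`. What is left cancels in the abelian group `ℂˣ`. -/

section Cochains

variable {A K : Type*} [CommGroup A] [Group K] [MulDistribMulAction K A] (F : K → K → A)

lemma deltaG_one_apply (f : Cq A K 1) (x : K) (g : Fin 2 → A × K) :
    deltaG F f x g = f (x * (g 0).2) ![g 1] * (f x ![sdMul F (g 0) (g 1)])⁻¹ * f x ![g 0] := by
  simp only [deltaG, sdAct, Fin.prod_univ_succ, Fin.prod_univ_zero, Fin.val_zero, Fin.val_succ,
    Nat.reduceAdd, Int.reduceNeg, Int.reducePow, zpow_neg, zpow_one, mul_one, mul_assoc]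
  congr <;> funext i <;> fin_cases i <;> rfl

lemma deltaG_two_apply (f : Cq A K 2) (x : K) (g : Fin 3 → A × K) :
    deltaG F f x g = f (x * (g 0).2) ![g 1, g 2] * (f x ![sdMul F (g 0) (g 1), g 2])⁻¹ *
      f x ![g 0, sdMul F (g 1) (g 2)] * (f x ![g 0, g 1])⁻¹ := by
  simp only [deltaG, sdAct, Fin.prod_univ_succ, Fin.prod_univ_zero, Fin.val_zero, Fin.val_succ,
    Nat.reduceAdd, Int.reduceNeg, Int.reducePow, zpow_neg, zpow_one, mul_one, mul_assoc]
  congr <;> funext i <;> fin_cases i <;> rfl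

end Cochains

lemma deltaK_two_apply {A K : Type*} [Group K] {q : ℕ} (h : Cpq A K 1 q) (k : Fin 2 → K) :
    deltaK h k = h ![k 1] * (h ![k 0 * k 1])⁻¹ * rAct (h ![k 0]) (k 1) := by
  simp only [deltaK, Fin.prod_univ_succ, Fin.prod_univ_zero, Fin.val_zero, Fin.castSucc_zero,
    Nat.reduceAdd, Int.reduceNeg, Int.reducePow, zpow_neg, zpow_one, mul_one]
  congr <;> funext i <;> fin_cases i <;> rfl

section Cocycles

variable {A K M : Type*} [CommGroup A] [Group K] [MulDistribMulAction K A] [CommGroup M]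

/-- `F̂ : K × K → Hom(A, M)` is a 2-cocycle for the right action `ρ^k = ρ ∘ (k • ·)`. -/
def IsDualTwoCocycle (Fh : K → K → A → M) : Prop :=
  ∀ (k₁ k₂ k₃ : K) (a : A),
    Fh k₂ k₃ a * Fh k₁ (k₂ * k₃) a = Fh (k₁ * k₂) k₃ a * Fh k₁ k₂ (k₃ • a)

/-- `δ_K ε = F̂ ∧ F`. -/
def DeltaEqCup (F : K → K → A) (Fh : K → K → A → M) (ε : K → K → K → M) : Prop :=
  ∀ k₁ k₂ k₃ k₄ : K,
    ε k₂ k₃ k₄ * (ε (k₁ * k₂) k₃ k₄)⁻¹ * ε k₁ (k₂ * k₃) k₄ * (ε k₁ k₂ (k₃ * k₄))⁻¹ *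
      ε k₁ k₂ k₃ = Fh k₁ k₂ (F k₃ k₄)

lemma IsDualTwoCocycle.apply_smul {Fh : K → K → A → M} (hFh : IsDualTwoCocycle Fh)
    (k₁ k₂ k₃ : K) (a : A) :
    Fh k₁ k₂ (k₃ • a) = Fh k₂ k₃ a * Fh k₁ (k₂ * k₃) a / Fh (k₁ * k₂) k₃ a := by
  rw [hFh, mul_div_cancel_left]

end Cocycles

section TwistedCochains

variable {A K : Type*} [CommGroup A] [Group K] [MulDistribMulAction K A] {F : K → K → A}
  {Fh : K → K → A →* ℂˣ} {ε : K → K → K → ℂˣ}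

lemma deltaG_muC_mul_omegaC (hFh : IsDualTwoCocycle (Fh · ·)) (hε : DeltaEqCup F (Fh · ·) ε)
    (x₁ : K) (g : Fin 3 → A × K) :
    deltaG F (muC Fh ε) x₁ g * omegaC Fh ε (g 0) (g 1) (g 2) = 1 := by
  simp only [deltaG_two_apply, muC, omegaC, sdMul, Matrix.cons_val_zero, Matrix.cons_val_one,
    map_mul, hFh.apply_smul, ← hε x₁ (g 0).2 (g 1).2 (g 2).2]
  apply Additive.ofMul.injective
  simp only [ofMul_mul, ofMul_inv, ofMul_div, ofMul_one]
  abel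

lemma deltaG_gammaC_apply (hFh : IsDualTwoCocycle (Fh · ·)) (hε : DeltaEqCup F (Fh · ·) ε)
    (y x₁ x₂ x₃ : K) (a₂ a₃ : A) :
    deltaG F (gammaC Fh ε y) x₁ ![(a₂, x₂), (a₃, x₃)] =
      muC Fh ε x₁ ![(a₂, x₂), (a₃, x₃)] * (muC Fh ε (y * x₁) ![(a₂, x₂), (a₃, x₃)])⁻¹ := by
  simp only [deltaG_one_apply, gammaC, muC, sdMul, Matrix.cons_val_zero, Matrix.cons_val_one,
    map_mul, hFh.apply_smul, ← hε y x₁ x₂ x₃]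
  apply Additive.ofMul.injective
  simp only [ofMul_mul, ofMul_inv, ofMul_div]
  abel

lemma deltaK_gammaC_apply (hFh : IsDualTwoCocycle (Fh · ·)) (hε : DeltaEqCup F (Fh · ·) ε)
    (k₁ k₂ x₁ x₂ : K) (a₂ : A) :
    deltaK (fun k : Fin 1 → K => gammaC Fh ε (k 0)) ![k₁, k₂] x₁ ![(a₂, x₂)] =
      Fh k₁ k₂ (x₁ • a₂) * Fh k₁ k₂ (F x₁ x₂) * ε k₁ k₂ (x₁ * x₂) * (ε k₁ k₂ x₁)⁻¹ := by
  simp only [deltaK_two_apply, gammaC, rAct, Pi.mul_apply, Pi.inv_apply, Matrix.cons_val_zero,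
    Matrix.cons_val_one, hFh.apply_smul, ← hε k₁ k₂ x₁ x₂]
  apply Additive.ofMul.injective
  simp only [ofMul_mul, ofMul_inv, ofMul_div]
  abel

end TwistedCochains

theorem statement10_general {A K : Type*} [CommGroup A] [Group K]
    [MulDistribMulAction K A]
    (F : K → K → A)
    (Fh : K → K → A →* ℂˣ)
    (hFh : ∀ (k₁ k₂ k₃ : K) (a : A),
      Fh k₂ k₃ a * Fh k₁ (k₂ * k₃) a = Fh (k₁ * k₂) k₃ a * Fh k₁ k₂ (k₃ • a))
    (ε : K → K → K → ℂˣ)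
    (hε : ∀ k₁ k₂ k₃ k₄ : K,
      ε k₂ k₃ k₄ * (ε (k₁ * k₂) k₃ k₄)⁻¹ * ε k₁ (k₂ * k₃) k₄ * (ε k₁ k₂ (k₃ * k₄))⁻¹ *
        ε k₁ k₂ k₃ = Fh k₁ k₂ (F k₃ k₄))
 :
    (∀ (x₁ : K) (g : Fin 3 → A × K),
      deltaG F (muC Fh ε) x₁ g * omegaC Fh ε (g 0) (g 1) (g 2) = 1) ∧
    (∀ (y x₁ x₂ x₃ : K) (a₂ a₃ : A),
      deltaG F (gammaC Fh ε y) x₁ ![(a₂, x₂), (a₃, x₃)] =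
        muC Fh ε x₁ ![(a₂, x₂), (a₃, x₃)] *
          (muC Fh ε (y * x₁) ![(a₂, x₂), (a₃, x₃)])⁻¹) ∧
    (∀ (k₁ k₂ x₁ x₂ : K) (a₂ : A),
      deltaK (fun k : Fin 1 → K => gammaC Fh ε (k 0)) ![k₁, k₂] x₁ ![(a₂, x₂)] =
        Fh k₁ k₂ (x₁ • a₂) * Fh k₁ k₂ (F x₁ x₂) *
          ε k₁ k₂ (x₁ * x₂) * (ε k₁ k₂ x₁)⁻¹) :=
  ⟨deltaG_muC_mul_omegaC hFh hε, deltaG_gammaC_apply hFh hε, deltaK_gammaC_apply hFh hε⟩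

/-- (i) `δ_G μ · π^*ω = 1`; (ii) `δ_G(γ(y)) = μ/(μ◁y)`;
(iii) the explicit formula for `δ_K γ`. -/
theorem statement10 {A K : Type*} [CommGroup A] [Group K] [Finite A] [Finite K]
    [MulDistribMulAction K A]
    (F : K → K → A)
    (hFn : ∀ k : K, F 1 k = 1 ∧ F k 1 = 1)
    (hF : ∀ k₁ k₂ k₃ : K, k₁ • F k₂ k₃ * F k₁ (k₂ * k₃) = F (k₁ * k₂) k₃ * F k₁ k₂)
    (Fh : K → K → A →* ℂˣ)
    (hFhn : ∀ k : K, Fh 1 k = 1 ∧ Fh k 1 = 1)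
    (hFh : ∀ (k₁ k₂ k₃ : K) (a : A),
      Fh k₂ k₃ a * Fh k₁ (k₂ * k₃) a = Fh (k₁ * k₂) k₃ a * Fh k₁ k₂ (k₃ • a))
    (ε : K → K → K → ℂˣ)
    (hεn : ∀ k₁ k₂ k₃ : K, k₁ = 1 ∨ k₂ = 1 ∨ k₃ = 1 → ε k₁ k₂ k₃ = 1)
    (hε : ∀ k₁ k₂ k₃ k₄ : K,
      ε k₂ k₃ k₄ * (ε (k₁ * k₂) k₃ k₄)⁻¹ * ε k₁ (k₂ * k₃) k₄ * (ε k₁ k₂ (k₃ * k₄))⁻¹ *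
        ε k₁ k₂ k₃ = Fh k₁ k₂ (F k₃ k₄))
 :
    (∀ (x₁ : K) (g : Fin 3 → A × K),
      deltaG F (muC Fh ε) x₁ g * omegaC Fh ε (g 0) (g 1) (g 2) = 1) ∧
    (∀ (y x₁ x₂ x₃ : K) (a₂ a₃ : A),
      deltaG F (gammaC Fh ε y) x₁ ![(a₂, x₂), (a₃, x₃)] =
        muC Fh ε x₁ ![(a₂, x₂), (a₃, x₃)] *
          (muC Fh ε (y * x₁) ![(a₂, x₂), (a₃, x₃)])⁻¹) ∧
    (∀ (k₁ k₂ x₁ x₂ : K) (a₂ : A),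
      deltaK (fun k : Fin 1 → K => gammaC Fh ε (k 0)) ![k₁, k₂] x₁ ![(a₂, x₂)] =
        Fh k₁ k₂ (x₁ • a₂) * Fh k₁ k₂ (F x₁ x₂) *
          ε k₁ k₂ (x₁ * x₂) * (ε k₁ k₂ x₁)⁻¹) :=
  statement10_general F Fh hFh ε hε
end

section
/- Let F̂ : K × K → 𝔸 be a normalized 2-cocycle and let ε : K³ → ℂˣ be a normalized cochain with δ_K ε = F̂ ∧ F. Let Ĝ = K ⋉_{F̂} 𝔸 be the group with underlying set K × 𝔸, product (k₁,ρ₁)(k₂,ρ₂) = (k₁k₂, ρ₁^{k₂}·ρ₂·F̂(k₁,k₂)) and identity (1,1). Then the function ω̂ : Ĝ³ → ℂˣ defined by ω̂((k₁,ρ₁),(k₂,ρ₂),(k₃,ρ₃)) := ε(k₁,k₂,k₃)·ρ₁(F(k₂,k₃)) is a normalized 3-cocycle on Ĝ with values in ℂˣ (trivial action): for all h₁,h₂,h₃,h₄ ∈ Ĝ, ω̂(h₂,h₃,h₄)·ω̂(h₁h₂,h₃,h₄)⁻¹·ω̂(h₁,h₂h₃,h₄)·ω̂(h₁,h₂,h₃h₄)⁻¹·ω̂(h₁,h₂,h₃)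 = 1. -/
open scoped BigOperators

/-- The right `K`-action on characters: `ρ^k(a) = ρ(ᵏa)`. -/
def rhoPow {A K : Type*} [CommGroup A] [Group K] [MulDistribMulAction K A]
    (ρ : A →* ℂˣ) (k : K) : A →* ℂˣ :=
  MonoidHom.mk' (fun a => ρ (k • a)) fun a b => by show ρ (k • (a * b)) = ρ (k • a) * ρ (k • b); rw [smul_mul', map_mul]

/-- The product of the twisted product `Ĝ = K ⋉_F̂ 𝔸`:
`(k₁,ρ₁)·(k₂,ρ₂) = (k₁k₂, ρ₁^{k₂}·ρ₂·F̂(k₁,k₂))`. -/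
def hatMul {A K : Type*} [CommGroup A] [Group K] [MulDistribMulAction K A]
    (Fh : K → K → A →* ℂˣ) (h₁ h₂ : K × (A →* ℂˣ)) : K × (A →* ℂˣ) :=
  (h₁.1 * h₂.1, rhoPow h₁.2 h₂.1 * h₂.2 * Fh h₁.1 h₂.1)

/-- `ω̂((k₁,ρ₁),(k₂,ρ₂),(k₃,ρ₃)) = ε(k₁,k₂,k₃)·ρ₁(F(k₂,k₃))`. -/
def omegaHat {A K : Type*} [CommGroup A] (F : K → K → A) (ε : K → K → K → ℂˣ)
    (h₁ h₂ h₃ : K × (A →* ℂˣ)) : ℂˣ :=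
  ε h₁.1 h₂.1 h₃.1 * h₁.2 (F h₂.1 h₃.1)

/-! The coboundary of `ω̂ = ε · (ρ₁ ∘ F)` splits into the coboundaries of its two factors. The
`ε`-factor only sees the `K`-coordinates, so its coboundary is `δ_K ε = F̂ ∧ F`; in the other one
the terms `ρ₂(F(k₃,k₄))` cancel, the cocycle identity of `F` kills the `ρ₁`-terms, and the twist
`F̂(k₁,k₂)` of the product `h₁h₂` leaves exactly `(F̂ ∧ F)⁻¹`. -/

section Coboundary

variable {X Y M : Type*} [CommGroup M]

def coboundary3 (mul : X → X → X) (f : X → X → X → M) (x₁ x₂ x₃ x₄ : X) : M :=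
  f x₂ x₃ x₄ * (f (mul x₁ x₂) x₃ x₄)⁻¹ * f x₁ (mul x₂ x₃) x₄ * (f x₁ x₂ (mul x₃ x₄))⁻¹ *
    f x₁ x₂ x₃

theorem coboundary3_mul (mul : X → X → X) (f g : X → X → X → M) (x₁ x₂ x₃ x₄ : X) :
    coboundary3 mul (fun a b c => f a b c * g a b c) x₁ x₂ x₃ x₄ =
      coboundary3 mul f x₁ x₂ x₃ x₄ * coboundary3 mul g x₁ x₂ x₃ x₄ := by
  simp only [coboundary3, mul_inv]
  ac_rfl

theorem coboundary3_comp {mulX : X → X → X} {mulY : Y → Y → Y} (p : X → Y)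
    (hp : ∀ x y, p (mulX x y) = mulY (p x) (p y)) (f : Y → Y → Y → M) (x₁ x₂ x₃ x₄ : X) :
    coboundary3 mulX (fun a b c => f (p a) (p b) (p c)) x₁ x₂ x₃ x₄ =
      coboundary3 mulY f (p x₁) (p x₂) (p x₃) (p x₄) := by
  simp only [coboundary3, hp]

end Coboundary

section OmegaHat

variable {A K : Type*} [CommGroup A] [Group K]

theorem omegaHat_eq_one_of_normalized {F : K → K → A} (hFn : ∀ k : K, F 1 k = 1 ∧ F k 1 = 1)
    {ε : K → K → K → ℂˣ} (hεn : ∀ k₁ k₂ k₃ : K, k₁ = 1 ∨ k₂ = 1 ∨ k₃ = 1 → ε k₁ k₂ k₃ = 1)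
    (h₁ h₂ h₃ : K × (A →* ℂˣ)) (h : h₁ = (1, 1) ∨ h₂ = (1, 1) ∨ h₃ = (1, 1)) :
    omegaHat F ε h₁ h₂ h₃ = 1 := by
  have hε : ε h₁.1 h₂.1 h₃.1 = 1 := hεn _ _ _ (by rcases h with rfl | rfl | rfl <;> simp)
  rcases h with rfl | rfl | rfl <;> simp [omegaHat, hε, hFn]

theorem coboundary3_hatMul_apply_F [MulDistribMulAction K A] {F : K → K → A}
    (hF : ∀ k₁ k₂ k₃ : K, k₁ • F k₂ k₃ * F k₁ (k₂ * k₃) = F (k₁ * k₂) k₃ * F k₁ k₂)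
    (Fh : K → K → A →* ℂˣ) (h₁ h₂ h₃ h₄ : K × (A →* ℂˣ)) :
    coboundary3 (hatMul Fh) (fun h₁ h₂ h₃ => h₁.2 (F h₂.1 h₃.1)) h₁ h₂ h₃ h₄ =
      (Fh h₁.1 h₂.1 (F h₃.1 h₄.1))⁻¹ := by
  obtain ⟨k₁, ρ₁⟩ := h₁
  obtain ⟨k₂, ρ₂⟩ := h₂
  have hρ := congrArg ρ₁ (hF k₂ h₃.1 h₄.1)
  simp only [map_mul] at hρ
  simp only [coboundary3, hatMul, rhoPow, MonoidHom.mul_apply, MonoidHom.mk'_apply]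
  rw [eq_mul_inv_of_mul_eq hρ.symm]
  apply Additive.ofMul.injective
  simp only [ofMul_mul, ofMul_inv]
  abel

end OmegaHat

theorem statement12_general {A K : Type*} [CommGroup A] [Group K]
    [MulDistribMulAction K A]
    (F : K → K → A)
    (hFn : ∀ k : K, F 1 k = 1 ∧ F k 1 = 1)
    (hF : ∀ k₁ k₂ k₃ : K, k₁ • F k₂ k₃ * F k₁ (k₂ * k₃) = F (k₁ * k₂) k₃ * F k₁ k₂)
    (Fh : K → K → A →* ℂˣ)
    (ε : K → K → K → ℂˣ)
    (hεn : ∀ k₁ k₂ k₃ : K, k₁ = 1 ∨ k₂ = 1 ∨ k₃ = 1 → ε k₁ k₂ k₃ = 1)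
    (hε : ∀ k₁ k₂ k₃ k₄ : K,
      ε k₂ k₃ k₄ * (ε (k₁ * k₂) k₃ k₄)⁻¹ * ε k₁ (k₂ * k₃) k₄ * (ε k₁ k₂ (k₃ * k₄))⁻¹ *
        ε k₁ k₂ k₃ = Fh k₁ k₂ (F k₃ k₄))
 :
    (∀ h₁ h₂ h₃ : K × (A →* ℂˣ),
      (h₁ = (1, 1) ∨ h₂ = (1, 1) ∨ h₃ = (1, 1)) → omegaHat F ε h₁ h₂ h₃ = 1) ∧
    (∀ h₁ h₂ h₃ h₄ : K × (A →* ℂˣ),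
      omegaHat F ε h₂ h₃ h₄ * (omegaHat F ε (hatMul Fh h₁ h₂) h₃ h₄)⁻¹ *
        omegaHat F ε h₁ (hatMul Fh h₂ h₃) h₄ *
        (omegaHat F ε h₁ h₂ (hatMul Fh h₃ h₄))⁻¹ *
        omegaHat F ε h₁ h₂ h₃ = 1) := by
  refine ⟨omegaHat_eq_one_of_normalized hFn hεn, fun h₁ h₂ h₃ h₄ => ?_⟩
  change coboundary3 (hatMul Fh) (fun h₁ h₂ h₃ => ε h₁.1 h₂.1 h₃.1 * h₁.2 (F h₂.1 h₃.1))
    h₁ h₂ h₃ h₄ = 1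
  rw [coboundary3_mul, coboundary3_comp Prod.fst (fun _ _ => rfl), coboundary3_hatMul_apply_F hF]
  exact mul_inv_eq_one.mpr (hε _ _ _ _)

/-- `ω̂` is a normalized 3-cocycle on `Ĝ = K ⋉_F̂ 𝔸` with values in
`ℂˣ` (trivial action). -/
theorem statement12 {A K : Type*} [CommGroup A] [Group K] [Finite A] [Finite K]
    [MulDistribMulAction K A]
    (F : K → K → A)
    (hFn : ∀ k : K, F 1 k = 1 ∧ F k 1 = 1)
    (hF : ∀ k₁ k₂ k₃ : K, k₁ • F k₂ k₃ * F k₁ (k₂ * k₃) = F (k₁ * k₂) k₃ * F k₁ k₂)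
    (Fh : K → K → A →* ℂˣ)
    (hFhn : ∀ k : K, Fh 1 k = 1 ∧ Fh k 1 = 1)
    (hFh : ∀ (k₁ k₂ k₃ : K) (a : A),
      Fh k₂ k₃ a * Fh k₁ (k₂ * k₃) a = Fh (k₁ * k₂) k₃ a * Fh k₁ k₂ (k₃ • a))
    (ε : K → K → K → ℂˣ)
    (hεn : ∀ k₁ k₂ k₃ : K, k₁ = 1 ∨ k₂ = 1 ∨ k₃ = 1 → ε k₁ k₂ k₃ = 1)
    (hε : ∀ k₁ k₂ k₃ k₄ : K,
      ε k₂ k₃ k₄ * (ε (k₁ * k₂) k₃ k₄)⁻¹ * ε k₁ (k₂ * k₃) k₄ * (ε k₁ k₂ (k₃ * k₄))⁻¹ *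
        ε k₁ k₂ k₃ = Fh k₁ k₂ (F k₃ k₄))
 :
    (∀ h₁ h₂ h₃ : K × (A →* ℂˣ),
      (h₁ = (1, 1) ∨ h₂ = (1, 1) ∨ h₃ = (1, 1)) → omegaHat F ε h₁ h₂ h₃ = 1) ∧
    (∀ h₁ h₂ h₃ h₄ : K × (A →* ℂˣ),
      omegaHat F ε h₂ h₃ h₄ * (omegaHat F ε (hatMul Fh h₁ h₂) h₃ h₄)⁻¹ *
        omegaHat F ε h₁ (hatMul Fh h₂ h₃) h₄ *
        (omegaHat F ε h₁ h₂ (hatMul Fh h₃ h₄))⁻¹ *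
        omegaHat F ε h₁ h₂ h₃ = 1) :=
  statement12_general F hFn hF Fh ε hεn hε
end
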